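/- arXiv:0907.0693 — 3 statements merged into one kernel-verified Lean document; each statement's English description precedes it below -/
import Mathlib

section
/- Let t_0 < t_1 < ... < t_N be distinct real numbers, N ≥ 1, and let 𝒟_N be the N×N Lagrange differentiation matrix built on the nodes t_1, ..., t_N. Let T = diag(t_1, ..., t_N). Then for each integer m with 0 ≤ m ≤ N−1, the vector v^{(m)} with entries v^{(m)}_j = (t_j - t_0)^m satisfies (T - t_0 I_N) 𝒟_N v^{(m)} = m · v^{(m)}. -/
/-! The entry `𝒟_{jk}` is `ℓ_k'(t_j)` for the Lagrange basis polynomial `ℓ_k` of the nodes, so `𝒟`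
maps the values at the nodes of a polynomial of degree `< N` to those of its derivative. Applied
to `(t - t₀)^m` it yields `m (t - t₀)^(m-1)`, and multiplying by `t - t₀` gives `m (t - t₀)^m`. -/

open Finset Matrix

/-- The Lagrange differentiation matrix on nodes `t`. -/
noncomputable def lagrangeD {ι : Type*} [Fintype ι] [DecidableEq ι] (t : ι → ℝ) :
    Matrix ι ι ℝ :=
  Matrix.of fun j k =>
    if j = k then ∑ l ∈ Finset.univ.erase j, (t j - t l)⁻¹
    else (∏ l ∈ Finset.univ.erase j, (t j - t l)) /
      ((t j - t k) * ∏ l ∈ Finset.univ.erase k, (t k - t l))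

open Polynomial Lagrange

namespace Lagrange

variable {F ι : Type*} [Field F] [DecidableEq ι] {s : Finset ι} {v : ι → F} {j k : ι}

theorem eval_derivative_basis_self (hvs : Set.InjOn v s) (hk : k ∈ s) :
    eval (v k) (derivative (Lagrange.basis s v k)) = ∑ l ∈ s.erase k, (v k - v l)⁻¹ := by
  rw [Lagrange.basis, derivative_prod_finset, eval_finsetSum]
  refine sum_congr rfl fun l _ => ?_
  have hbd : ∀ b ∈ s.erase k, eval (v k) (basisDivisor (v k) (v b)) = 1 := fun b hb =>
    eval_basisDivisor_left_of_ne fun h => (mem_erase.1 hb).1 (hvs (mem_erase.1 hb).2 hk h.symm)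
  rw [eval_mul, eval_prod, prod_congr rfl fun b hb => hbd b (mem_of_mem_erase hb), prod_const_one,
    one_mul, basisDivisor]
  simp

theorem eval_derivative_basis_of_ne (hvs : Set.InjOn v s) (hj : j ∈ s) (hk : k ∈ s) (hjk : j ≠ k) :
    eval (v j) (derivative (Lagrange.basis s v k)) =
      (∏ l ∈ s.erase j, (v j - v l)) / ((v j - v k) * ∏ l ∈ s.erase k, (v k - v l)) := by
  have hjk' : v j - v k ≠ 0 := sub_ne_zero.2 fun h => hjk (hvs hj hk h)
  rw [basis_eq_prod_sub_inv_mul_nodal_div hk, ← nodal_erase_eq_nodal_div hk, derivative_C_mul,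
    eval_mul, eval_C, eval_nodal_derivative_eval_node_eq (mem_erase.2 ⟨hjk, hj⟩), eval_nodal,
    ← mul_prod_erase (s.erase j) _ (mem_erase.2 ⟨hjk.symm, hk⟩), erase_right_comm,
    mul_div_mul_left _ _ hjk', nodalWeight, prod_inv_distrib, inv_mul_eq_div]

end Lagrange

section

variable {ι : Type*} [Fintype ι] [DecidableEq ι] {t : ι → ℝ}

theorem lagrangeD_apply (ht : Function.Injective t) (j k : ι) :
    lagrangeD t j k = eval (t j) (derivative (Lagrange.basis univ t k)) := by
  rw [lagrangeD, of_apply]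
  split_ifs with hjk
  · rw [hjk, eval_derivative_basis_self ht.injOn (mem_univ k)]
  · rw [eval_derivative_basis_of_ne ht.injOn (mem_univ j) (mem_univ k) hjk]

theorem lagrangeD_mulVec_eval (ht : Function.Injective t) {p : ℝ[X]}
    (hp : p.degree < Fintype.card ι) :
    lagrangeD t *ᵥ (fun k => p.eval (t k)) = fun j => (derivative p).eval (t j) := by
  funext j
  conv_rhs => rw [eq_interpolate ht.injOn hp, interpolate_apply]
  simp only [mulVec, dotProduct, lagrangeD_apply ht, derivative_sum, derivative_mul, derivative_C,
    mul_zero, add_zero, eval_finsetSum, eval_mul, eval_C, mul_comm]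

end

theorem X_sub_C_mul_derivative_X_sub_C_pow {R : Type*} [CommRing R] (c : R) (m : ℕ) :
    (X - C c) * derivative ((X - C c) ^ m) = C (m : R) * (X - C c) ^ m := by
  rw [derivative_X_sub_C_pow]
  cases m with
  | zero => simp
  | succ n => rw [Nat.add_sub_cancel, pow_succ']; ring

/-- `(T - t₀ I) 𝒟_N` acts on the vector of powers `(t_j - t₀)^m` as multiplication by `m`. -/
theorem stmt_4 (N : ℕ) (hN : 1 ≤ N) (t : Fin (N + 1) → ℝ) (ht : StrictMono t)
    (m : ℕ) (hm : m ≤ N - 1) :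
    ((Matrix.diagonal fun j : Fin N => t j.succ - t 0) *
        lagrangeD (fun j : Fin N => t j.succ)).mulVec
        (fun j : Fin N => (t j.succ - t 0) ^ m) =
      (m : ℝ) • fun j : Fin N => (t j.succ - t 0) ^ m := by
  have hinj : Function.Injective fun j : Fin N => t j.succ :=
    (ht.comp Fin.strictMono_succ).injective
  have hdeg : ((X - C (t 0)) ^ m).degree < (Fintype.card (Fin N) : WithBot ℕ) := by
    rw [degree_pow, degree_X_sub_C, nsmul_one, Fintype.card_fin]
    exact_mod_cast (by omega : m < N)
  have hD := lagrangeD_mulVec_eval hinj hdeg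
  simp only [eval_pow, eval_sub, eval_X, eval_C] at hD
  rw [← mulVec_mulVec, hD]
  funext j
  rw [mulVec_diagonal]
  simpa using congrArg (eval (t j.succ)) (X_sub_C_mul_derivative_X_sub_C_pow (t 0) m)
end

section
/- Let t_0 < t_1 < ... < t_N be distinct real numbers, N ≥ 1, and let D be the trailing N×N submatrix of the Lagrange differentiation matrix (deleting the row and column indexed by t_0). Then det D = N! / ∏_{j=1}^N (t_j - t_0). -/
/-!
The differentiation matrix maps the values at the nodes of a polynomial of degree at most `N`
to the values of its derivative. The polynomials `(X - t₀) ^ (k + 1)`, `k < N`, vanish at `t₀`,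
so the trailing block `D` alone maps their values `dᵢ ^ (k + 1)`, where `dᵢ = tᵢ - t₀`, to
`(k + 1) dᵢ ^ k`. With `V` the Vandermonde matrix of `d` this reads
`D * diag(d) * V = V * diag(1, …, N)`, and `V` is invertible.
-/

open Finset Matrix

open Polynomial Lagrange

theorem Lagrange.eval_derivative_basis {F ι : Type*} [Field F] [DecidableEq ι] {s : Finset ι}
    {v : ι → F} {i : ι} (hi : i ∈ s) (x : F) :
    (derivative (Lagrange.basis s v i)).eval x =
      nodalWeight s v i * ∑ m ∈ s.erase i, ∏ l ∈ (s.erase i).erase m, (x - v l) := by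
  rw [basis_eq_prod_sub_inv_mul_nodal_div hi, ← nodal_erase_eq_nodal_div hi, derivative_C_mul,
    eval_mul, eval_C, derivative_nodal, eval_finsetSum]
  simp only [eval_nodal]

section LagrangeD

variable {ι : Type*} [Fintype ι] [DecidableEq ι] {t : ι → ℝ}

theorem lagrangeD_eq_eval_derivative_basis (ht : Function.Injective t) (j k : ι) :
    lagrangeD t j k = (derivative (Lagrange.basis univ t k)).eval (t j) := by
  have hsub : ∀ {a b : ι}, a ≠ b → t a - t b ≠ 0 := fun h => sub_ne_zero_of_ne (ht.ne h)
  rw [Lagrange.eval_derivative_basis (mem_univ k), nodalWeight, lagrangeD, of_apply]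
  split_ifs with hjk
  · subst hjk
    rw [mul_sum]
    refine sum_congr rfl fun m hm => ?_
    rw [prod_inv_distrib, ← mul_prod_erase _ (fun l => t j - t l) hm, mul_inv,
      mul_assoc, inv_mul_cancel₀ (prod_ne_zero_iff.2 fun l hl => hsub ?_), mul_one]
    exact (ne_of_mem_erase (mem_of_mem_erase hl)).symm
  · have hj : j ∈ univ.erase k := mem_erase.2 ⟨hjk, mem_univ j⟩
    have hk : k ∈ univ.erase j := mem_erase.2 ⟨Ne.symm hjk, mem_univ k⟩
    rw [sum_eq_single_of_mem j hj fun m _ hmj => prod_eq_zero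
      (mem_erase.2 ⟨Ne.symm hmj, hj⟩) (sub_self _), prod_inv_distrib,
      ← mul_prod_erase _ (fun l => t j - t l) hk, ← mul_prod_erase _ (fun l => t k - t l) hj,
      erase_right_comm]
    have hS : ∏ l ∈ (univ.erase j).erase k, (t k - t l) ≠ 0 :=
      prod_ne_zero_iff.2 fun l hl => hsub (ne_of_mem_erase hl).symm
    have hjk' := hsub hjk
    have hkj := hsub (Ne.symm hjk)
    field_simp

theorem sum_lagrangeD_mul_eval (ht : Function.Injective t) {p : ℝ[X]}
    (hp : p.degree < Fintype.card ι) (j : ι) :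
    ∑ k, lagrangeD t j k * p.eval (t k) = (derivative p).eval (t j) := by
  conv_rhs => rw [eq_interpolate (s := univ) (f := p) ht.injOn (by simpa using hp)]
  rw [interpolate_apply, map_sum, eval_finsetSum]
  refine sum_congr rfl fun k _ => ?_
  rw [derivative_C_mul, eval_mul, eval_C, lagrangeD_eq_eval_derivative_basis ht, mul_comm]

end LagrangeD

section TrailingBlock

variable {N : ℕ} {t : Fin (N + 1) → ℝ}

theorem sum_lagrangeD_succ_mul_eval (ht : Function.Injective t) {p : ℝ[X]}
    (hp : p.degree < ↑(N + 1)) (hp₀ : p.eval (t 0) = 0) (j : Fin N) :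
    ∑ i : Fin N, lagrangeD t j.succ i.succ * p.eval (t i.succ) =
      (derivative p).eval (t j.succ) := by
  rw [← sum_lagrangeD_mul_eval ht (by rwa [Fintype.card_fin]) j.succ, Fin.sum_univ_succ, hp₀,
    mul_zero, zero_add]

theorem lagrangeD_submatrix_succ_mul_diagonal_vandermonde (ht : Function.Injective t) :
    (lagrangeD t).submatrix Fin.succ Fin.succ *
        (diagonal (fun i => t i.succ - t 0) * vandermonde (fun i => t i.succ - t 0)) =
      vandermonde (fun i => t i.succ - t 0) * diagonal (fun k : Fin N => (k : ℝ) + 1) := by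
  ext j k
  have hdeg : ((X - C (t 0)) ^ ((k : ℕ) + 1)).degree < ↑(N + 1) := by
    rw [degree_pow, degree_X_sub_C, nsmul_one]
    exact_mod_cast Nat.succ_lt_succ k.isLt
  have h := sum_lagrangeD_succ_mul_eval ht hdeg (by simp) j
  simp only [eval_pow, eval_sub, eval_X, eval_C, derivative_X_sub_C_pow, eval_mul,
    Nat.add_sub_cancel] at h
  push_cast at h
  rw [mul_diagonal, mul_apply]
  simp only [diagonal_mul, vandermonde_apply, submatrix_apply, ← pow_succ']
  rw [h, mul_comm]

end TrailingBlock

theorem stmt_8_general (N : ℕ) (t : Fin (N + 1) → ℝ) (ht : StrictMono t) :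
    ((lagrangeD t).submatrix Fin.succ Fin.succ).det =
      (N.factorial : ℝ) / ∏ j : Fin N, (t j.succ - t 0) := by
  have hdet := congrArg det (lagrangeD_submatrix_succ_mul_diagonal_vandermonde ht.injective)
  rw [det_mul, det_mul, det_mul, det_diagonal, det_diagonal] at hdet
  have hd : ∀ j : Fin N, t j.succ - t 0 ≠ 0 :=
    fun j => sub_ne_zero.2 (ht.injective.ne j.succ_ne_zero)
  have hV : (vandermonde fun i : Fin N => t i.succ - t 0).det ≠ 0 :=
    det_vandermonde_ne_zero_iff.2 fun i j h =>
      Fin.succ_injective _ (ht.injective (sub_left_injective h))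
  have hfact : ∏ k : Fin N, ((k : ℝ) + 1) = N.factorial := by
    rw [Fin.prod_univ_eq_prod_range (fun i => (i : ℝ) + 1), ← prod_range_add_one_eq_factorial]
    push_cast
    rfl
  rw [eq_div_iff (prod_ne_zero_iff.2 fun j _ => hd j), ← hfact]
  exact mul_right_cancel₀ hV (by linear_combination hdet)

/-- Determinant of the trailing block of the Lagrange differentiation matrix. -/
theorem stmt_8 (N : ℕ) (hN : 1 ≤ N) (t : Fin (N + 1) → ℝ) (ht : StrictMono t) :
    ((lagrangeD t).submatrix Fin.succ Fin.succ).det =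
      (N.factorial : ℝ) / ∏ j : Fin N, (t j.succ - t 0) :=
  stmt_8_general N t ht
end

section
/- Let N ≥ 1, h > 0, and consider equispaced nodes t_j = t_0 + j h, j = 0, 1, ..., N. Let d_j = 𝒟_{j0} for j = 1, ..., N be the first-column entries (excluding the (0,0) entry) of the Lagrange differentiation matrix 𝒟 on these nodes. Then max_{1 ≤ j ≤ N} |d_j| = 1/(N h), and this maximum is attained at j = 1 and j = N. -/
/-! On equispaced nodes `t_j - t_l = (j - l) h`, so `|P'(t_j)| = j! (N - j)! h^N` and
`|𝒟_{j0}| = (j - 1)! (N - j)! / (N! h) = 1 / (N h C(N-1, j-1))`. The binomial coefficient is at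
least `1`, with equality at `j = 1` and `j = N`. -/

open Finset Matrix

open Nat

theorem prod_range_abs_sub (j : ℕ) : ∏ i ∈ range j, |(j : ℝ) - i| = j ! := by
  rw [← descFactorial_self, descFactorial_eq_prod_range, cast_prod]
  refine prod_congr rfl fun i hi => ?_
  rw [cast_sub (mem_range.mp hi).le, abs_of_nonneg (by simpa using (mem_range.mp hi).le)]

theorem prod_Ico_abs_sub (j N : ℕ) : ∏ i ∈ Ico (j + 1) (N + 1), |(j : ℝ) - i| = (N - j)! := by
  rw [prod_Ico_eq_prod_range, Nat.add_sub_add_right, ← prod_range_add_one_eq_factorial,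
    cast_prod]
  refine prod_congr rfl fun i _ => ?_
  rw [abs_sub_comm, abs_of_nonneg (by push_cast; linarith)]
  push_cast
  ring

theorem prod_erase_range_abs_sub {j N : ℕ} (hj : j ≤ N) :
    ∏ i ∈ (range (N + 1)).erase j, |(j : ℝ) - i| = j ! * (N - j)! := by
  have hsplit : (range (N + 1)).erase j = range j ∪ Ico (j + 1) (N + 1) := by
    ext i
    simp only [mem_erase, mem_range, mem_union, mem_Ico]
    omega
  have hdisj : Disjoint (range j) (Ico (j + 1) (N + 1)) := by
    simp only [disjoint_left, mem_range, mem_Ico]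
    omega
  rw [hsplit, prod_union hdisj, prod_range_abs_sub, prod_Ico_abs_sub]

theorem prod_erase_fin_abs_sub {N : ℕ} (j : Fin (N + 1)) :
    ∏ l ∈ univ.erase j, |((j : ℕ) : ℝ) - (l : ℕ)| = (j : ℕ)! * (N - j)! := by
  have hval : (range (N + 1)).erase (j : ℕ) = (univ.erase j).map Fin.valEmbedding := by
    rw [map_erase, Fin.map_valEmbedding_univ, Nat.Iio_eq_range]
    rfl
  rw [← prod_erase_range_abs_sub j.is_le, hval, prod_map]
  rfl

theorem abs_prod_erase_sub_of_equispaced {N : ℕ} {t : Fin (N + 1) → ℝ} {t₀ h : ℝ}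
    (ht : ∀ j, t j = t₀ + (j : ℕ) * h) (j : Fin (N + 1)) :
    |∏ l ∈ univ.erase j, (t j - t l)| = (j : ℕ)! * (N - j)! * |h| ^ N := by
  have hsub : ∀ l, |t j - t l| = |((j : ℕ) : ℝ) - (l : ℕ)| * |h| := fun l => by
    rw [ht, ht, ← abs_mul]; ring_nf
  simp_rw [abs_prod, hsub, prod_mul_distrib, prod_const, prod_erase_fin_abs_sub]
  simp

theorem abs_lagrangeD_col_zero_of_equispaced {N : ℕ} {t : Fin (N + 1) → ℝ} {t₀ h : ℝ}
    (hh : h ≠ 0) (ht : ∀ j, t j = t₀ + (j : ℕ) * h) {j : Fin (N + 1)} (hj : j ≠ 0) :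
    |lagrangeD t j 0| = 1 / (N * (N - 1).choose (j - 1) * |h|) := by
  have hj0 : (j : ℕ) ≠ 0 := Fin.val_ne_zero_iff.mpr hj
  have hdiff : |t j - t 0| = (j : ℕ) * |h| := by
    rw [ht, ht, Fin.val_zero]; simp [abs_mul]
  simp only [lagrangeD, of_apply, if_neg hj, abs_div, abs_mul, hdiff,
    abs_prod_erase_sub_of_equispaced ht]
  obtain ⟨i, hi⟩ := exists_eq_add_one_of_ne_zero hj0
  obtain ⟨n, rfl⟩ : ∃ n, N = n + 1 := exists_eq_add_one_of_ne_zero (by omega)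
  have hin : i ≤ n := by omega
  have hchoose : (n.choose i * i ! * (n - i)! : ℝ) = n ! := by
    exact_mod_cast choose_mul_factorial_mul_factorial hin
  simp only [hi, Fin.val_zero]
  rw [show n + 1 - (i + 1) = n - i by omega, Nat.add_sub_cancel]
  simp only [factorial_zero, Nat.sub_zero, factorial_succ, cast_mul, ← hchoose]
  field_simp
  push_cast
  ring

/-- For equispaced nodes the first-column entries of the differentiation matrix are
bounded in absolute value by `1/(N h)`, with the maximum attained at `j = 1` and `j = N`. -/
theorem stmt_9 (N : ℕ) (hN : 1 ≤ N) (t₀ h : ℝ) (hh : 0 < h)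
    (t : Fin (N + 1) → ℝ) (ht : ∀ j, t j = t₀ + (j : ℕ) * h) :
    (∀ j : Fin (N + 1), j ≠ 0 → |lagrangeD t j 0| ≤ 1 / (N * h)) ∧
      |lagrangeD t 1 0| = 1 / (N * h) ∧
      |lagrangeD t (Fin.last N) 0| = 1 / (N * h) := by
  have hentry : ∀ j : Fin (N + 1), j ≠ 0 →
      |lagrangeD t j 0| = 1 / (N * (N - 1).choose (j - 1) * h) :=
    fun j hj => by rw [abs_lagrangeD_col_zero_of_equispaced hh.ne' ht hj, abs_of_pos hh]
  obtain ⟨n, rfl⟩ : ∃ n, N = n + 1 := exists_eq_add_one_of_ne_zero (by omega)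
  refine ⟨fun j hj => ?_, ?_, ?_⟩
  · rw [hentry j hj]
    have hchoose : (1 : ℝ) ≤ (n + 1 - 1).choose (j - 1) := by exact_mod_cast choose_pos (by omega)
    gcongr
    exact le_mul_of_one_le_right (by positivity) hchoose
  · rw [hentry 1 one_ne_zero]
    simp
  · rw [hentry _ Fin.last_pos.ne']
    simp
end
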